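/- arXiv:2007.07280 — 2 statements merged into one kernel-verified Lean document; each statement's English description precedes it below -/
import Mathlib

section
/- Let Γ be a cubic graph embedded in a closed surface S such that the complement S ∖ Γ is a disjoint union of open disks. Then Γ admits a Tait coloring whose induced surface is S if and only if the dual graph Γ' (with one vertex per face and edges between faces sharing an edge of Γ) admits a proper 3-coloring of its vertex set. -/
/-- A cellular embedding of a cubic graph in a closed surface, encoded combinatorially:
vertices `V`, edges `E`, and faces `F` (the open disks of the complement).  Every edge
has two endpoints (`ends`) and two sides (`sides`).  At each vertex `v` there are three
incident edges `vedge v 0, vedge v 1, vedge v 2` (these are all the edges at `v`), and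
three corner faces `vface v 0, vface v 1, vface v 2`, arranged so that the two sides of
the edge `vedge v i` at `v` are the two corner faces other than `vface v i` — this
captures that `v` has a disk neighborhood in the surface. -/
structure CubicEmbedding (V E F : Type) where
  ends : E → Sym2 V
  sides : E → Sym2 F
  vedge : V → Fin 3 → E
  vface : V → Fin 3 → F
  vedge_inj : ∀ v, Function.Injective (vedge v)
  vedge_mem : ∀ v i, v ∈ ends (vedge v i)
  vedge_all : ∀ v e, v ∈ ends e → ∃ i, vedge v i = e
  corner : ∀ v i, sides (vedge v i) = s(vface v (i + 1), vface v (i + 2))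

lemma third_color_ne (x y : Fin 3) (h : x ≠ y) : x ≠ -(x + y) ∧ y ≠ -(x + y) := by
  revert h; revert x y; decide

lemma third_color_eq (a b c : Fin 3) (h1 : a ≠ b) (h2 : b ≠ c) (h3 : a ≠ c) :
    -(b + c) = a := by revert h1 h2 h3; revert a b c; decide

/-- For a cubic graph `Γ` cellularly embedded in a closed surface `S`,
`Γ` admits a Tait coloring whose induced surface is `S` — i.e., an edge coloring
`c : E → Fin 3` meeting all three colors at every vertex, for which the faces are
exactly the bi-colored cycles: each face `f` can be assigned the missing color `P f`
of its color pair so that the two sides of any edge `e` carry the two distinct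
missing colors different from `c e` — if and only if the dual graph (faces as
vertices, adjacent when sharing an edge of `Γ`) admits a proper 3-coloring. -/
theorem tait_coloring_inducing_S_iff_dual_three_colorable
    (V E F : Type) [Fintype V] [Fintype E] [Fintype F] (M : CubicEmbedding V E F) :
    (∃ c : E → Fin 3,
        (∀ v : V, Function.Surjective fun i => c (M.vedge v i)) ∧
        ∃ P : F → Fin 3, ∀ (e : E) (f₁ f₂ : F), M.sides e = s(f₁, f₂) →
          P f₁ ≠ P f₂ ∧ P f₁ ≠ c e ∧ P f₂ ≠ c e) ↔
    (∃ κ : F → Fin 3, ∀ (e : E) (f₁ f₂ : F), M.sides e = s(f₁, f₂) → κ f₁ ≠ κ f₂) := by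
  constructor
  · rintro ⟨c, -, P, hP⟩
    exact ⟨P, fun e f₁ f₂ h => (hP e f₁ f₂ h).1⟩
  · rintro ⟨κ, hκ⟩
    set c : E → Fin 3 := fun e =>
      Sym2.lift ⟨fun a b => -(κ a + κ b), fun a b => by simp [add_comm]⟩ (M.sides e) with hc
    have hce : ∀ (e : E) (f₁ f₂ : F), M.sides e = s(f₁, f₂) → c e = -(κ f₁ + κ f₂) := by
      intro e f₁ f₂ h
      rw [hc]; simp [h]
    refine ⟨c, ?_, κ, ?_⟩
    · intro v
      -- the three corner faces get pairwise distinct colors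
      have h12 : κ (M.vface v 1) ≠ κ (M.vface v 2) := hκ _ _ _ (M.corner v 0)
      have h20 : κ (M.vface v 2) ≠ κ (M.vface v 0) := hκ _ _ _ (M.corner v 1)
      have h01 : κ (M.vface v 0) ≠ κ (M.vface v 1) := hκ _ _ _ (M.corner v 2)
      have key : ∀ i, c (M.vedge v i) = κ (M.vface v i) := by
        intro i
        have := hce _ _ _ (M.corner v i)
        rw [this]
        fin_cases i
        · show -(κ (M.vface v 1) + κ (M.vface v 2)) = κ (M.vface v 0)
          exact third_color_eq _ _ _ h01 h12 h20.symm
        · show -(κ (M.vface v 2) + κ (M.vface v 0)) = κ (M.vface v 1)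
          exact third_color_eq _ _ _ h12 h20 h01.symm
        · show -(κ (M.vface v 0) + κ (M.vface v 1)) = κ (M.vface v 2)
          exact third_color_eq _ _ _ h20 h01 h12.symm
      intro y
      have hinj : Function.Injective fun i => κ (M.vface v i) := by
        intro i j hij
        simp only at hij
        fin_cases i <;> fin_cases j <;> first
          | rfl
          | exact absurd hij (by assumption)
          | exact absurd hij.symm (by assumption)
      have hsurj := Finite.surjective_of_injective hinj
      obtain ⟨i, hi⟩ := hsurj y
      exact ⟨i, by simpa [key] using hi⟩
    · intro e f₁ f₂ h
      have hne : κ f₁ ≠ κ f₂ := hκ e f₁ f₂ h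
      have := third_color_ne _ _ hne
      rw [hce e f₁ f₂ h]
      exact ⟨hne, this.1, this.2⟩
end

section
/- Let Γ be a connected Tait-colored cubic graph with more than one red-blue cycle. Then there exists a green edge of Γ whose two endpoints lie on distinct red-blue cycles, and compressing Γ along this edge decreases the number of red-blue cycles by one while not increasing the number of blue-green cycles or green-red cycles. -/
/-!
Since `Γ` is connected but has two red-blue cycles, some green edge `v — v'` joins two distinct
red-blue cycles. Compressing along it glues these two cycles into one and leaves every other
cycle alone. The key point is that a bicolored cycle through `v` with `v` removed is still a
path in the compressed graph, joining the two neighbours of `v` (the alternating walk from one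
returns to the other without meeting `v'`, which lies on a different red-blue cycle). Hence,
for a non-green color `a` and any color `c ≠ a`, the map pushing `v` and `v'` along their
edges of color `a` induces a surjection from the bicolored cycles avoiding `c` in `Γ` onto
those of the compressed graph, so no count increases; for `c` green it is a bijection once
the two red-blue cycles through `v` and `v'` are identified.
-/

/-- A Tait-colored cubic graph (multigraphs allowed), encoded by three
fixed-point-free involutions on the vertex set, one for each color `c : Fin 3`:
`mat c` matches every vertex to the other endpoint of its unique edge of color `c`. -/
structure TaitGraph (V : Type) where
  mat : Fin 3 → V → V
  invol : ∀ c v, mat c (mat c v) = v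
  nofix : ∀ c v, mat c v ≠ v

namespace TaitGraph

variable {V V' : Type}

/-- Two vertices lie on the same bi-colored cycle of the two colors other than `c`. -/
def Conn (Γ : TaitGraph V) (c : Fin 3) : V → V → Prop :=
  Relation.ReflTransGen (fun x y => ∃ c', c' ≠ c ∧ Γ.mat c' x = y)

/-- The patch number for the pair of colors other than `c`: the number of
bi-colored cycles of those two colors. -/
noncomputable def patches (Γ : TaitGraph V) (c : Fin 3) : ℕ :=
  Nat.card (Quot (Γ.Conn c))

def OnePatch (Γ : TaitGraph V) : Prop := ∀ c, Γ.patches c = 1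

def Bipartite (Γ : TaitGraph V) : Prop :=
  ∃ s : V → Bool, ∀ c v, s (Γ.mat c v) = !s v

def Connected (Γ : TaitGraph V) : Prop :=
  Nonempty V ∧ ∀ x y : V, Relation.ReflTransGen (fun a b => ∃ c, Γ.mat c a = b) x y

/-- The number of edges: for each color, the edges of that color are the orbits
of the corresponding involution. -/
noncomputable def edgeCount (Γ : TaitGraph V) : ℕ :=
  ∑ c : Fin 3, Nat.card (Quot (fun x y : V => Γ.mat c x = y))

/-- Euler characteristic of the induced surface, computed from its CW structure:
vertices minus edges plus 2-cells (one 2-cell per bi-colored cycle). -/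
noncomputable def chiS (Γ : TaitGraph V) : ℤ :=
  (Nat.card V : ℤ) - (Γ.edgeCount : ℤ) + (∑ c : Fin 3, (Γ.patches c : ℤ))

/-- The edge of color `c` at `v` is orientation-reversing: its endpoints lie on the same
bi-colored cycle of the other two colors and receive the same sign in any alternating
`±`-labeling of the bi-colored cycles. -/
def OrientationReversing (Γ : TaitGraph V) (c : Fin 3) (v : V) : Prop :=
  Γ.Conn c v (Γ.mat c v) ∧
    ∀ s : V → Bool, (∀ c' v', c' ≠ c → s (Γ.mat c' v') = !s v') → s (Γ.mat c v) = s v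

/-- The edge of color `c` at `v` is orientation-preserving: its endpoints lie on the same
bi-colored cycle of the other two colors and receive opposite signs in any alternating
`±`-labeling of the bi-colored cycles. -/
def OrientationPreserving (Γ : TaitGraph V) (c : Fin 3) (v : V) : Prop :=
  Γ.Conn c v (Γ.mat c v) ∧
    ∀ s : V → Bool, (∀ c' v', c' ≠ c → s (Γ.mat c' v') = !s v') → s (Γ.mat c v) = !s v

/-- `Γ'` is the compression of `Γ` along the (non-parallel) edge of color `c` with
endpoints `v` and `Γ.mat c v`: delete the edge and its endpoints, and for each of the
other two colors merge the two deleted-vertex edges into a single edge. -/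
def IsCompression (Γ : TaitGraph V) (c : Fin 3) (v : V) (Γ' : TaitGraph V') : Prop :=
  ∃ φ : V' ≃ {w : V // w ≠ v ∧ w ≠ Γ.mat c v},
    (∀ w : V', ((φ (Γ'.mat c w) : V)) = Γ.mat c ((φ w : V))) ∧
    ∀ c' : Fin 3, c' ≠ c → ∀ w : V',
      (Γ.mat c' ((φ w : V)) = v ∧ ((φ (Γ'.mat c' w) : V)) = Γ.mat c' (Γ.mat c v)) ∨
      (Γ.mat c' ((φ w : V)) = Γ.mat c v ∧ ((φ (Γ'.mat c' w) : V)) = Γ.mat c' v) ∨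
      (Γ.mat c' ((φ w : V)) ≠ v ∧ Γ.mat c' ((φ w : V)) ≠ Γ.mat c v ∧
        ((φ (Γ'.mat c' w) : V)) = Γ.mat c' ((φ w : V)))

end TaitGraph

/-- Bundled finite Tait-colored cubic graphs. -/
def TG : Type := Σ n : ℕ, TaitGraph (Fin n)

/-- `Y` is obtained from `X` by a p-compression: compression along a connecting edge
(one whose endpoints lie on distinct bi-colored cycles of the opposite two colors). -/
def PComp (X Y : TG) : Prop :=
  ∃ (c : Fin 3) (v : Fin X.1),
    ¬ X.2.Conn c v (X.2.mat c v) ∧ X.2.IsCompression c v Y.2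

/-- `Y` is obtained from `X` by a t-compression: compression along a non-parallel
orientation-preserving edge. -/
def TComp (X Y : TG) : Prop :=
  ∃ (c : Fin 3) (v : Fin X.1),
    X.2.OrientationPreserving c v ∧
    (∀ c' : Fin 3, c' ≠ c → X.2.mat c' v ≠ X.2.mat c v) ∧
    X.2.IsCompression c v Y.2

/-- `Y` is obtained from `X` by a c-compression: compression along an
orientation-reversing edge. -/
def CComp (X Y : TG) : Prop :=
  ∃ (c : Fin 3) (v : Fin X.1),
    X.2.OrientationReversing c v ∧ X.2.IsCompression c v Y.2

/-- The theta graph: two vertices joined by three edges, one of each color.  (Any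
Tait-colored cubic graph on two vertices is the theta graph.) -/
def IsTheta (X : TG) : Prop := X.1 = 2

namespace TaitGraph

variable {V : Type} (Γ : TaitGraph V)

lemma mat_injective (c : Fin 3) : Function.Injective (Γ.mat c) :=
  Function.Involutive.injective (Γ.invol c)

lemma conn_of_mat {c c' : Fin 3} (h : c' ≠ c) (x : V) : Γ.Conn c x (Γ.mat c' x) :=
  .single ⟨c', h, rfl⟩

lemma conn_symm {c : Fin 3} {x y : V} (h : Γ.Conn c x y) : Γ.Conn c y x := by
  induction h with
  | refl => exact .refl
  | tail _ hst ih =>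
    obtain ⟨c', hc', rfl⟩ := hst
    exact .head ⟨c', hc', Γ.invol c' _⟩ ih

lemma conn_equivalence (c : Fin 3) : Equivalence (Γ.Conn c) :=
  ⟨fun _ => .refl, Γ.conn_symm, .trans⟩

lemma quot_mk_eq_iff {c : Fin 3} {x y : V} :
    Quot.mk (Γ.Conn c) x = Quot.mk (Γ.Conn c) y ↔ Γ.Conn c x y :=
  (Γ.conn_equivalence c).quot_mk_eq_iff x y

lemma exists_not_conn_mat {e : Fin 3} (hconn : Γ.Connected) (hp : 2 ≤ Γ.patches e) :
    ∃ v, ¬ Γ.Conn e v (Γ.mat e v) := by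
  by_contra! h
  have hall (x y : V) : Γ.Conn e x y := by
    refine Relation.reflTransGen_closed ?_ _ _ (hconn.2 x y)
    rintro a _ ⟨c, rfl⟩
    by_cases hce : c = e
    · exact hce ▸ h a
    · exact Γ.conn_of_mat hce a
  have : Subsingleton (Quot (Γ.Conn e)) :=
    ⟨Quot.ind fun x => Quot.ind fun y => Quot.sound (hall x y)⟩
  have := Finite.card_le_one_iff_subsingleton.mpr this
  rw [patches] at hp
  omega

section Alternating

variable (a b : Fin 3)

lemma iterate_mat_comp_mat_iterate (k : ℕ) (x : V) :
    (Γ.mat b ∘ Γ.mat a)^[k] (Γ.mat a ((Γ.mat b ∘ Γ.mat a)^[k] x)) = Γ.mat a x := by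
  induction k with
  | zero => rfl
  | succ k ih =>
    rw [Function.iterate_succ_apply, Function.iterate_succ_apply']
    simpa only [Function.comp_apply, Γ.invol] using ih

-- `mat a` conjugates `mat b ∘ mat a` to its inverse, so reaching `mat a x` after `k` steps
-- would make `mat a` (`k` even) or `mat b` (`k` odd) fix the midpoint of the walk.
lemma iterate_mat_comp_ne_mat (k : ℕ) (x : V) : (Γ.mat b ∘ Γ.mat a)^[k] x ≠ Γ.mat a x := by
  intro h
  obtain ⟨j, rfl | rfl⟩ := Nat.even_or_odd' k
  · rw [two_mul, Function.iterate_add_apply, ← Γ.iterate_mat_comp_mat_iterate a b j x] at h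
    exact Γ.nofix a _ (((Γ.mat_injective b).comp (Γ.mat_injective a)).iterate j h).symm
  · rw [show 2 * j + 1 = j + (j + 1) by ring, Function.iterate_add_apply,
      ← Γ.iterate_mat_comp_mat_iterate a b j x, Function.iterate_succ_apply'] at h
    exact Γ.nofix b _ (((Γ.mat_injective b).comp (Γ.mat_injective a)).iterate j h)

lemma conn_iterate_mat_comp {c : Fin 3} (hac : a ≠ c) (hbc : b ≠ c) (k : ℕ) (x : V) :
    Γ.Conn c x ((Γ.mat b ∘ Γ.mat a)^[k] x) := by
  induction k with
  | zero => exact .refl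
  | succ k ih =>
    rw [Function.iterate_succ_apply']
    exact (ih.trans (Γ.conn_of_mat hac _)).trans (Γ.conn_of_mat hbc _)

end Alternating

section Compression

variable {e : Fin 3} {v : V}

lemma ne_ends_of_conn (hv : ¬ Γ.Conn e v (Γ.mat e v)) {u x : V} (hu : u = v ∨ u = Γ.mat e v)
    (hux : Γ.Conn e u x) (hxu : x ≠ u) : x ≠ v ∧ x ≠ Γ.mat e v := by
  rcases hu with rfl | rfl
  · exact ⟨hxu, fun h => hv (h ▸ hux)⟩
  · exact ⟨fun h => hv (Γ.conn_symm (h ▸ hux)), hxu⟩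

lemma mat_ne_ends (hv : ¬ Γ.Conn e v (Γ.mat e v)) {u : V} (hu : u = v ∨ u = Γ.mat e v)
    {c : Fin 3} (hc : c ≠ e) : Γ.mat c u ≠ v ∧ Γ.mat c u ≠ Γ.mat e v :=
  Γ.ne_ends_of_conn hv hu (Γ.conn_of_mat hc u) (Γ.nofix c u)

lemma mat_ends {u : V} (hu : u = v ∨ u = Γ.mat e v) :
    Γ.mat e u = v ∨ Γ.mat e u = Γ.mat e v := by
  rcases hu with rfl | rfl
  · exact .inr rfl
  · exact .inl (Γ.invol e v)

lemma mat_ne_ends_of_ne_ends {w : V} (hw : w ≠ v ∧ w ≠ Γ.mat e v) :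
    Γ.mat e w ≠ v ∧ Γ.mat e w ≠ Γ.mat e v :=
  ⟨fun h => hw.2 (by rw [← h, Γ.invol]), fun h => hw.1 (Γ.mat_injective e h)⟩

lemma mat_mat_mat_ne_ends (hv : ¬ Γ.Conn e v (Γ.mat e v)) {c : Fin 3} {w : V}
    (hw : w ≠ v ∧ w ≠ Γ.mat e v) (h : Γ.mat c w = v ∨ Γ.mat c w = Γ.mat e v) :
    Γ.mat c (Γ.mat e (Γ.mat c w)) ≠ v ∧ Γ.mat c (Γ.mat e (Γ.mat c w)) ≠ Γ.mat e v := by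
  by_cases hc : c = e
  · exact absurd (hc ▸ h) (not_or.mpr (Γ.mat_ne_ends_of_ne_ends hw))
  · exact Γ.mat_ne_ends hv (Γ.mat_ends h) hc

open Classical in
/-- An edge of color `c` entering an endpoint of the compressed edge is rerouted along
that edge to the edge of color `c` at the other endpoint. -/
noncomputable def compressMat (hv : ¬ Γ.Conn e v (Γ.mat e v)) (c : Fin 3)
    (w : {w : V // w ≠ v ∧ w ≠ Γ.mat e v}) : {w : V // w ≠ v ∧ w ≠ Γ.mat e v} :=
  if h : Γ.mat c w = v ∨ Γ.mat c w = Γ.mat e v then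
    ⟨Γ.mat c (Γ.mat e (Γ.mat c w)), Γ.mat_mat_mat_ne_ends hv w.2 h⟩
  else ⟨Γ.mat c w, not_or.mp h⟩

variable (hv : ¬ Γ.Conn e v (Γ.mat e v))

lemma compressMat_val_of_ends {c : Fin 3} {w : {w : V // w ≠ v ∧ w ≠ Γ.mat e v}}
    (h : Γ.mat c w = v ∨ Γ.mat c w = Γ.mat e v) :
    (Γ.compressMat hv c w : V) = Γ.mat c (Γ.mat e (Γ.mat c w)) := by
  rw [compressMat, dif_pos h]

lemma compressMat_of_ne_ends {c : Fin 3} {w : {w : V // w ≠ v ∧ w ≠ Γ.mat e v}}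
    (h : Γ.mat c w ≠ v ∧ Γ.mat c w ≠ Γ.mat e v) :
    Γ.compressMat hv c w = ⟨Γ.mat c w, h⟩ := by
  rw [compressMat, dif_neg (not_or.mpr h)]

noncomputable def compress : TaitGraph {w : V // w ≠ v ∧ w ≠ Γ.mat e v} where
  mat := Γ.compressMat hv
  invol c w := by
    by_cases h : Γ.mat c w = v ∨ Γ.mat c w = Γ.mat e v
    · have h' : Γ.mat c (Γ.compressMat hv c w) = v ∨
          Γ.mat c (Γ.compressMat hv c w) = Γ.mat e v := by
        rw [Γ.compressMat_val_of_ends hv h, Γ.invol]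
        exact Γ.mat_ends h
      apply Subtype.ext
      rw [Γ.compressMat_val_of_ends hv h', Γ.compressMat_val_of_ends hv h, Γ.invol, Γ.invol,
        Γ.invol]
    · have h' : Γ.mat c (Γ.mat c w) ≠ v ∧ Γ.mat c (Γ.mat c w) ≠ Γ.mat e v := by
        rw [Γ.invol]
        exact w.2
      rw [Γ.compressMat_of_ne_ends hv (not_or.mp h), Γ.compressMat_of_ne_ends hv h']
      exact Subtype.ext (Γ.invol c w)
  nofix c w hw := by
    by_cases h : Γ.mat c w = v ∨ Γ.mat c w = Γ.mat e v
    · have hw' := congrArg (Γ.mat c ∘ Subtype.val) hw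
      simp only [Function.comp_apply, Γ.compressMat_val_of_ends hv h, Γ.invol] at hw'
      exact Γ.nofix e _ hw'
    · rw [Γ.compressMat_of_ne_ends hv (not_or.mp h)] at hw
      exact Γ.nofix c w (congrArg Subtype.val hw)

lemma compress_mat : (Γ.compress hv).mat = Γ.compressMat hv := rfl

lemma isCompression_compress : Γ.IsCompression e v (Γ.compress hv) := by
  refine ⟨Equiv.refl _, fun w => ?_, fun c _ w => ?_⟩
  · rw [compress_mat, Γ.compressMat_of_ne_ends hv (Γ.mat_ne_ends_of_ne_ends w.2)]
    rfl
  · simp only [Equiv.refl_apply, compress_mat]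
    by_cases h1 : Γ.mat c w = v
    · exact .inl ⟨h1, by rw [Γ.compressMat_val_of_ends hv (.inl h1), h1]⟩
    by_cases h2 : Γ.mat c w = Γ.mat e v
    · exact .inr <| .inl ⟨h2, by rw [Γ.compressMat_val_of_ends hv (.inr h2), h2, Γ.invol]⟩
    · exact .inr <| .inr ⟨h1, h2, by rw [Γ.compressMat_of_ne_ends hv ⟨h1, h2⟩]⟩

end Compression

section Retraction

variable {e : Fin 3} {v : V} (hv : ¬ Γ.Conn e v (Γ.mat e v)) {a : Fin 3} (ha : a ≠ e)

open Classical in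
noncomputable def retract (x : V) : {w : V // w ≠ v ∧ w ≠ Γ.mat e v} :=
  if h : x = v ∨ x = Γ.mat e v then ⟨Γ.mat a x, Γ.mat_ne_ends hv h ha⟩
  else ⟨x, not_or.mp h⟩

lemma retract_of_ends {u : V} (hu : u = v ∨ u = Γ.mat e v) :
    Γ.retract hv ha u = ⟨Γ.mat a u, Γ.mat_ne_ends hv hu ha⟩ := by
  rw [retract, dif_pos hu]

lemma retract_of_ne_ends {x : V} (hx : x ≠ v ∧ x ≠ Γ.mat e v) :
    Γ.retract hv ha x = ⟨x, hx⟩ := by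
  rw [retract, dif_neg (not_or.mpr hx)]

lemma retract_surjective : Function.Surjective (Γ.retract hv ha) :=
  fun w => ⟨w, Γ.retract_of_ne_ends hv ha w.2⟩

lemma retract_mat_of_ends {u : V} (hu : u = v ∨ u = Γ.mat e v) :
    Γ.retract hv ha (Γ.mat a u) = Γ.retract hv ha u := by
  rw [Γ.retract_of_ends hv ha hu, Γ.retract_of_ne_ends hv ha (Γ.mat_ne_ends hv hu ha)]

lemma conn_retract (x : V) : Γ.Conn e x (Γ.retract hv ha x) := by
  by_cases hx : x = v ∨ x = Γ.mat e v
  · rw [Γ.retract_of_ends hv ha hx]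
    exact Γ.conn_of_mat ha x
  · rw [Γ.retract_of_ne_ends hv ha (not_or.mp hx)]
    exact .refl

lemma compress_mat_retract_of_ends {u : V} (hu : u = v ∨ u = Γ.mat e v) :
    (Γ.compress hv).mat a (Γ.retract hv ha u) = Γ.retract hv ha (Γ.mat e u) := by
  have hu' : Γ.mat a (Γ.mat a u) = v ∨ Γ.mat a (Γ.mat a u) = Γ.mat e v := by
    rwa [Γ.invol]
  rw [Γ.retract_of_ends hv ha (Γ.mat_ends hu), Γ.retract_of_ends hv ha hu]
  apply Subtype.ext
  rw [compress_mat, Γ.compressMat_val_of_ends hv hu', Γ.invol]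

lemma compress_conn_retract_mat_of_ne_ends {c c' : Fin 3} (hc' : c' ≠ c) {x : V}
    (hx : x ≠ v ∧ x ≠ Γ.mat e v) (hy : Γ.mat c' x ≠ v ∧ Γ.mat c' x ≠ Γ.mat e v) :
    (Γ.compress hv).Conn c (Γ.retract hv ha x) (Γ.retract hv ha (Γ.mat c' x)) := by
  rw [Γ.retract_of_ne_ends hv ha hx, Γ.retract_of_ne_ends hv ha hy]
  exact .single ⟨c', hc', Γ.compressMat_of_ne_ends hv hy⟩

/-- Removing `u` from its bicolored cycle leaves a path from `mat a u` to `mat b u`: the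
alternating walk from `mat a u` returns to `mat b u` and meets neither endpoint of the
compressed edge on the way. -/
lemma compress_conn_retract_mat_of_ends [Finite V] {b c : Fin 3} (hbe : b ≠ e) (hac : a ≠ c)
    (hbc : b ≠ c) {u : V} (hu : u = v ∨ u = Γ.mat e v) :
    (Γ.compress hv).Conn c (Γ.retract hv ha u) (Γ.retract hv ha (Γ.mat b u)) := by
  set f := Γ.mat b ∘ Γ.mat a
  set n := Function.minimalPeriod f u
  have hn : 0 < n := Function.minimalPeriod_pos_of_mem_periodicPts
    (((Γ.mat_injective b).comp (Γ.mat_injective a)).mem_periodicPts u)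
  have hfk (k : ℕ) (hk : 0 < k) (hkn : k < n) : f^[k] u ≠ v ∧ f^[k] u ≠ Γ.mat e v :=
    Γ.ne_ends_of_conn hv hu (Γ.conn_iterate_mat_comp a b ha hbe k u)
      (Function.not_isPeriodicPt_of_pos_of_lt_minimalPeriod hk.ne' hkn)
  have hafk (k : ℕ) : Γ.mat a (f^[k] u) ≠ v ∧ Γ.mat a (f^[k] u) ≠ Γ.mat e v :=
    Γ.ne_ends_of_conn hv hu
      ((Γ.conn_iterate_mat_comp a b ha hbe k u).trans (Γ.conn_of_mat ha _)) fun h =>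
        Γ.iterate_mat_comp_ne_mat a b k u (by simpa only [Γ.invol] using congrArg (Γ.mat a) h)
  have hchain (k : ℕ) (hk : k < n) : (Γ.compress hv).Conn c
      (Γ.retract hv ha (Γ.mat a u)) (Γ.retract hv ha (Γ.mat a (f^[k] u))) := by
    induction k with
    | zero => exact .refl
    | succ k ih =>
      have hsucc : f^[k + 1] u = Γ.mat b (Γ.mat a (f^[k] u)) :=
        Function.iterate_succ_apply' f k u
      have hfk' := hfk (k + 1) k.succ_pos hk
      refine ((ih (by omega)).trans ?_).trans
        (Γ.compress_conn_retract_mat_of_ne_ends hv ha hac hfk' (hafk (k + 1)))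
      rw [hsucc]
      exact Γ.compress_conn_retract_mat_of_ne_ends hv ha hbc (hafk k) (hsucc ▸ hfk')
  have hlast : Γ.mat a (f^[n - 1] u) = Γ.mat b u := by
    have hper : f (f^[n - 1] u) = u := by
      rw [← Function.iterate_succ_apply' f, Nat.succ_eq_add_one, Nat.sub_add_cancel hn]
      exact Function.iterate_minimalPeriod
    simpa only [f, Function.comp_apply, Γ.invol] using congrArg (Γ.mat b) hper
  rw [← Γ.retract_mat_of_ends hv ha hu, ← hlast]
  exact hchain (n - 1) (by omega)

lemma compress_conn_retract_mat [Finite V] {c c' : Fin 3} (hac : a ≠ c) (hc' : c' ≠ c)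
    (x : V) :
    (Γ.compress hv).Conn c (Γ.retract hv ha x) (Γ.retract hv ha (Γ.mat c' x)) := by
  have of_ends {u : V} (hu : u = v ∨ u = Γ.mat e v) :
      (Γ.compress hv).Conn c (Γ.retract hv ha u) (Γ.retract hv ha (Γ.mat c' u)) := by
    by_cases hce : c' = e
    · subst hce
      rw [← Γ.compress_mat_retract_of_ends hv ha hu]
      exact .single ⟨a, hac, rfl⟩
    · exact Γ.compress_conn_retract_mat_of_ends hv ha hce hac hc' hu
  by_cases hx : x = v ∨ x = Γ.mat e v
  · exact of_ends hx
  by_cases hy : Γ.mat c' x = v ∨ Γ.mat c' x = Γ.mat e v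
  · simpa only [Γ.invol] using (Γ.compress hv).conn_symm (of_ends hy)
  · exact Γ.compress_conn_retract_mat_of_ne_ends hv ha hc' (not_or.mp hx) (not_or.mp hy)

lemma compress_conn_retract [Finite V] {c : Fin 3} (hac : a ≠ c) {x y : V}
    (h : Γ.Conn c x y) :
    (Γ.compress hv).Conn c (Γ.retract hv ha x) (Γ.retract hv ha y) := by
  refine Relation.ReflTransGen.lift' (Γ.retract hv ha) ?_ _ _ h
  rintro x _ ⟨c', hc', rfl⟩
  exact Γ.compress_conn_retract_mat hv ha hac hc' x

end Retraction

section Patches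

variable {e : Fin 3} {v : V} (hv : ¬ Γ.Conn e v (Γ.mat e v))

theorem compress_patches_le [Finite V] (c : Fin 3) :
    (Γ.compress hv).patches c ≤ Γ.patches c := by
  obtain ⟨a, hae, hac⟩ := (by decide : ∀ e c : Fin 3, ∃ a, a ≠ e ∧ a ≠ c) e c
  exact Nat.card_le_card_of_surjective _ <| Quot.map_surjective (f := Γ.retract hv hae)
    (fun _ _ => Γ.compress_conn_retract hv hae hac) (Γ.retract_surjective hv hae)

def ConnEnds (e : Fin 3) (v x : V) : Prop := Γ.Conn e v x ∨ Γ.Conn e (Γ.mat e v) x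

variable {Γ} in
lemma ConnEnds.of_conn {x y : V} (hx : Γ.ConnEnds e v x) (h : Γ.Conn e x y) :
    Γ.ConnEnds e v y :=
  hx.imp (·.trans h) (·.trans h)

lemma connEnds_of_conn {u x : V} (hu : u = v ∨ u = Γ.mat e v) (h : Γ.Conn e u x) :
    Γ.ConnEnds e v x := by
  rcases hu with rfl | rfl
  exacts [.inl h, .inr h]

lemma conn_or_connEnds_of_compress_conn {x y : {w : V // w ≠ v ∧ w ≠ Γ.mat e v}}
    (h : (Γ.compress hv).Conn e x y) :
    Γ.Conn e x y ∨ Γ.ConnEnds e v x ∧ Γ.ConnEnds e v y := by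
  induction h with
  | refl => exact .inl .refl
  | @tail y z _ hyz ih =>
    obtain ⟨c, hc, rfl⟩ := hyz
    by_cases hy : Γ.mat c y = v ∨ Γ.mat c y = Γ.mat e v
    · have hyE : Γ.ConnEnds e v y := Γ.connEnds_of_conn hy (Γ.conn_symm (Γ.conn_of_mat hc y))
      have hzE : Γ.ConnEnds e v ((Γ.compress hv).mat c y) := by
        rw [compress_mat, Γ.compressMat_val_of_ends hv hy]
        exact Γ.connEnds_of_conn (Γ.mat_ends hy) (Γ.conn_of_mat hc _)
      exact .inr ⟨ih.elim (fun h => hyE.of_conn (Γ.conn_symm h)) And.left, hzE⟩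
    · rw [compress_mat, Γ.compressMat_of_ne_ends hv (not_or.mp hy)]
      exact ih.imp (·.trans (Γ.conn_of_mat hc y))
        fun h => ⟨h.1, h.2.of_conn (Γ.conn_of_mat hc y)⟩

variable {a : Fin 3} (ha : a ≠ e)

lemma conn_of_compress_conn_retract {x y : V} (hx : ¬ Γ.Conn e v x) (hy : ¬ Γ.Conn e v y)
    (h : (Γ.compress hv).Conn e (Γ.retract hv ha x) (Γ.retract hv ha y)) : Γ.Conn e x y := by
  have hx' := Γ.conn_retract hv ha x
  have hy' := Γ.conn_retract hv ha y
  rcases Γ.conn_or_connEnds_of_compress_conn hv h with h | ⟨hxE, hyE⟩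
  · exact (hx'.trans h).trans (Γ.conn_symm hy')
  · have hxv' := Or.resolve_left (hxE.of_conn (Γ.conn_symm hx')) hx
    have hyv' := Or.resolve_left (hyE.of_conn (Γ.conn_symm hy')) hy
    exact (Γ.conn_symm hxv').trans hyv'

lemma compress_conn_retract_mat_of_conn [Finite V] {x : V} (h : Γ.Conn e v x) :
    (Γ.compress hv).Conn e (Γ.retract hv ha (Γ.mat e v)) (Γ.retract hv ha x) := by
  refine .head ⟨a, ha, ?_⟩ (Γ.compress_conn_retract hv ha ha h)
  rw [Γ.compress_mat_retract_of_ends hv ha (.inr rfl), Γ.invol]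

theorem compress_patches_add_one [Finite V] : (Γ.compress hv).patches e + 1 = Γ.patches e := by
  classical
  obtain ⟨a, ha⟩ := (by decide : ∀ e : Fin 3, ∃ a, a ≠ e) e
  let F : Quot (Γ.Conn e) → Quot ((Γ.compress hv).Conn e) :=
    Quot.map (Γ.retract hv ha) fun _ _ => Γ.compress_conn_retract hv ha ha
  have hne {x : V} : Quot.mk (Γ.Conn e) x ≠ Quot.mk _ v ↔ ¬ Γ.Conn e v x := by
    rw [Ne, quot_mk_eq_iff]
    exact not_congr ⟨Γ.conn_symm, Γ.conn_symm⟩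
  -- off the class of `v`, `F` is a bijection: it merges the classes of `v` and `mat e v`
  have hF : Function.Bijective fun q : {q // q ≠ Quot.mk (Γ.Conn e) v} => F q := by
    constructor
    · rintro ⟨⟨x⟩, hx⟩ ⟨⟨y⟩, hy⟩ hxy
      exact Subtype.ext <| Quot.sound <| Γ.conn_of_compress_conn_retract hv ha (hne.mp hx)
        (hne.mp hy) ((Γ.compress hv).quot_mk_eq_iff.mp hxy)
    · rintro ⟨w⟩
      by_cases hw : Γ.Conn e v w
      · refine ⟨⟨Quot.mk _ (Γ.mat e v), hne.mpr hv⟩, Quot.sound ?_⟩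
        simpa only [Γ.retract_of_ne_ends hv ha w.2] using
          Γ.compress_conn_retract_mat_of_conn hv ha hw
      · exact ⟨⟨Quot.mk _ w, hne.mpr hw⟩,
          congrArg (Quot.mk _) (Γ.retract_of_ne_ends hv ha w.2)⟩
  rw [patches, patches, ← Nat.card_congr (Equiv.ofBijective _ hF), ← Finite.card_option,
    Nat.card_congr (Equiv.optionSubtypeNe _)]

end Patches

end TaitGraph

/-- Let `Γ` be a connected Tait-colored cubic graph with more than one
red-blue cycle (red = color 0, blue = color 1; red-blue cycles are the bi-colored
cycles of the colors other than green = color 2).  Then there is a green edge whose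
endpoints lie on distinct red-blue cycles, and compressing along it decreases the
number of red-blue cycles by one while not increasing the number of blue-green
cycles or green-red cycles. -/
theorem connecting_edge_compression
    (V : Type) [Fintype V] (Γ : TaitGraph V) (hconn : Γ.Connected)
    (hp : 2 ≤ Γ.patches 2) :
    ∃ v : V, ¬ Γ.Conn 2 v (Γ.mat 2 v) ∧
      ∃ Γ' : TaitGraph {w : V // w ≠ v ∧ w ≠ Γ.mat 2 v},
        Γ.IsCompression 2 v Γ' ∧
        Γ'.patches 2 + 1 = Γ.patches 2 ∧
        Γ'.patches 0 ≤ Γ.patches 0 ∧ Γ'.patches 1 ≤ Γ.patches 1 := by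
  obtain ⟨v, hv⟩ := Γ.exists_not_conn_mat hconn hp
  exact ⟨v, hv, Γ.compress hv, Γ.isCompression_compress hv, Γ.compress_patches_add_one hv,
    Γ.compress_patches_le hv 0, Γ.compress_patches_le hv 1⟩
end
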